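/- Fix k ≥ 3 and a graph G with m edges whose high-neighborhood subgraphs G⁺(u) have at most 2√m vertices each. Then in the interference graph H on k-cliques (two cliques with the same minimum vertex adjacent iff they share an edge among non-minimum vertices), every vertex of H has degree at most C(k,2)·(2√m)^{k−3}·(k−3)! ≤ C·m^{(k−3)/2} for a constant C depending only on k. -/
import Mathlib


/-- The degree-based total order: `x ≺ y` iff `d(x) < d(y)`, or `d(x) = d(y)` and `x < y`. -/
def degPrec {V : Type} [Fintype V] [LinearOrder V] (G : SimpleGraph V)
    [DecidableRel G.Adj] (x y : V) : Prop :=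
  G.degree x < G.degree y ∨ (G.degree x = G.degree y ∧ x < y)

instance {V : Type} [Fintype V] [LinearOrder V] (G : SimpleGraph V)
    [DecidableRel G.Adj] (x y : V) : Decidable (degPrec G x y) := by
  unfold degPrec; infer_instance

/-- The high neighborhood `Γ⁺(u)`: neighbors of `u` that are larger under `≺`. -/
def gammaPlus {V : Type} [Fintype V] [LinearOrder V] (G : SimpleGraph V)
    [DecidableRel G.Adj] (u : V) : Finset V :=
  (G.neighborFinset u).filter (fun x => degPrec G u x)

/-- The neighbors in the interference graph `H` of a `k`-clique `Q` with
`≺`-minimum vertex `u`: the `k`-cliques `Q' ≠ Q` with the same minimum vertex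
`u` that share with `Q` at least one edge among their non-minimum vertices. -/
def interfNbrs {V : Type} [Fintype V] [LinearOrder V] (G : SimpleGraph V)
    [DecidableRel G.Adj] (k : ℕ) (u : V) (Q : Finset V) : Set (Finset V) :=
  {Q' : Finset V | G.IsNClique k Q' ∧ Q' ≠ Q ∧ u ∈ Q' ∧
    (∀ v ∈ Q', v ≠ u → degPrec G u v) ∧
    (∃ x y, G.Adj x y ∧ x ∈ Q.erase u ∧ y ∈ Q.erase u ∧
      x ∈ Q'.erase u ∧ y ∈ Q'.erase u)}

/-- Degree bound in the interference graph `H` on `k`-cliques: for `k ≥ 3`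
there is a constant `C` depending only on `k` such that, in any graph with `m`
edges whose high-neighborhoods have at most `2√m` vertices each, every
`k`-clique `Q` (with minimum vertex `u`) has at most
`C(k,2)·(2√m)^{k-3}·(k-3)! ≤ C·m^{(k-3)/2}` neighbors in `H`. -/
theorem stmt14 (k : ℕ) (hk : 3 ≤ k) :
    ∃ C : ℝ, 0 < C ∧
      ∀ (V : Type) (_ : Fintype V) (_ : LinearOrder V) (G : SimpleGraph V)
        (_ : DecidableRel G.Adj) (m : ℕ), m = G.edgeFinset.card →
        (∀ u : V, ((gammaPlus G u).card : ℝ) ≤ 2 * Real.sqrt m) →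
        ∀ (u : V) (Q : Finset V), G.IsNClique k Q → u ∈ Q →
          (∀ v ∈ Q, v ≠ u → degPrec G u v) →
          (((interfNbrs G k u Q).ncard : ℝ)
              ≤ (Nat.choose k 2 : ℝ) * (2 * Real.sqrt m) ^ (k - 3)
                  * (Nat.factorial (k - 3))) ∧
          (((interfNbrs G k u Q).ncard : ℝ)
              ≤ C * (m : ℝ) ^ (((k : ℝ) - 3) / 2)) := by
  classical
  refine ⟨(Nat.choose k 2 : ℝ) * 2 ^ (k - 3) * (Nat.factorial (k - 3)),
    by
      have h1 : 0 < Nat.choose k 2 := Nat.choose_pos (by omega)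
      have h2 : 0 < Nat.factorial (k - 3) := Nat.factorial_pos _
      positivity, ?_⟩
  intro V _ _ G _ m hm hgam u Q hQ huQ hmin
  have hsq : (0:ℝ) ≤ Real.sqrt m := Real.sqrt_nonneg _
  set gp := gammaPlus G u with hgp
  set s := interfNbrs G k u Q with hs
  -- the edge-picking function
  set pick : Finset V → Finset V := fun P =>
    if h : ∃ x, ∃ y, G.Adj x y ∧ x ∈ Q.erase u ∧ y ∈ Q.erase u ∧
        x ∈ P.erase u ∧ y ∈ P.erase u then
      {h.choose, h.choose_spec.choose} else ∅ with hpickdef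
  have pick_spec : ∀ P ∈ s, ∃ x y, pick P = {x, y} ∧ G.Adj x y ∧
      x ∈ Q.erase u ∧ y ∈ Q.erase u ∧ x ∈ P.erase u ∧ y ∈ P.erase u := by
    intro P hP
    obtain ⟨-, -, -, -, hEx⟩ := hP
    have hEx' : ∃ x, ∃ y, G.Adj x y ∧ x ∈ Q.erase u ∧ y ∈ Q.erase u ∧
        x ∈ P.erase u ∧ y ∈ P.erase u := hEx
    refine ⟨hEx'.choose, hEx'.choose_spec.choose, ?_, hEx'.choose_spec.choose_spec⟩
    simp only [hpickdef, dif_pos hEx']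
  -- membership facts
  have hmem : ∀ P ∈ s, insert u (pick P) ⊆ P ∧ (insert u (pick P)).card = 3 := by
    intro P hP
    obtain ⟨x, y, hpe, hadj, _, _, hxP, hyP⟩ := pick_spec P hP
    obtain ⟨hPclique, _, huP, _, _⟩ := hP
    have hxP' : x ∈ P := Finset.mem_of_mem_erase hxP
    have hyP' : y ∈ P := Finset.mem_of_mem_erase hyP
    have hxu : x ≠ u := Finset.ne_of_mem_erase hxP
    have hyu : y ≠ u := Finset.ne_of_mem_erase hyP
    have hxy : x ≠ y := hadj.ne
    constructor
    · rw [hpe]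
      intro z hz
      simp only [Finset.mem_insert, Finset.mem_singleton] at hz
      rcases hz with rfl | rfl | rfl <;> assumption
    · rw [hpe]
      rw [Finset.card_insert_of_notMem (by simp [hxu.symm, hyu.symm]),
        Finset.card_insert_of_notMem (by simp [hxy]), Finset.card_singleton]
  -- the counting bound
  have hnat : s.ncard ≤ Nat.choose (k-1) 2 * Nat.choose gp.card (k-3) := by
    have hle : s.ncard ≤ ((((Q.erase u).powersetCard 2 ×ˢ gp.powersetCard (k-3)) :
        Finset (Finset V × Finset V)) : Set (Finset V × Finset V)).ncard := by
      apply Set.ncard_le_ncard_of_injOn (fun P => (pick P, P \ insert u (pick P)))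
      · -- maps into target
        intro P hP
        obtain ⟨x, y, hpe, hadj, hxQ, hyQ, hxP, hyP⟩ := pick_spec P hP
        obtain ⟨hsub, hcard3⟩ := hmem P hP
        obtain ⟨hPclique, _, huP, hdeg, _⟩ := hP
        simp only [Finset.coe_mem, Set.mem_setOf_eq, Finset.mem_coe, Finset.mem_product,
          Finset.mem_powersetCard]
        refine ⟨⟨?_, ?_⟩, ?_, ?_⟩
        · rw [hpe]; intro z hz
          simp only [Finset.mem_insert, Finset.mem_singleton] at hz
          rcases hz with rfl | rfl <;> assumption
        · rw [hpe]
          rw [Finset.card_insert_of_notMem (by simp [hadj.ne]), Finset.card_singleton]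
        · intro z hz
          obtain ⟨hz1, hz2⟩ := Finset.mem_sdiff.mp hz
          have hzu : z ≠ u := by
            rintro rfl; exact hz2 (Finset.mem_insert_self _ _)
          rw [hgp, gammaPlus, Finset.mem_filter, SimpleGraph.mem_neighborFinset]
          exact ⟨hPclique.1 huP hz1 (Ne.symm hzu), hdeg z hz1 hzu⟩
        · rw [Finset.card_sdiff_of_subset hsub, hcard3, hPclique.2]
      · -- injective
        intro P1 h1 P2 h2 heq
        simp only [Prod.mk.injEq] at heq
        obtain ⟨he, hd⟩ := heq
        have h1s := (hmem P1 h1).1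
        have h2s := (hmem P2 h2).1
        calc P1 = P1 \ insert u (pick P1) ∪ insert u (pick P1) :=
              (Finset.sdiff_union_of_subset h1s).symm
          _ = P2 \ insert u (pick P2) ∪ insert u (pick P2) := by rw [hd, he]
          _ = P2 := Finset.sdiff_union_of_subset h2s
    rw [Set.ncard_coe_finset, Finset.card_product, Finset.card_powersetCard,
      Finset.card_powersetCard, Finset.card_erase_of_mem huQ, hQ.2] at hle
    exact hle
  -- real bound part 1
  have hb1 : ((interfNbrs G k u Q).ncard : ℝ)
      ≤ (Nat.choose k 2 : ℝ) * (2 * Real.sqrt m) ^ (k - 3) * (Nat.factorial (k - 3)) := by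
    calc ((interfNbrs G k u Q).ncard : ℝ)
        ≤ ((Nat.choose (k-1) 2 * Nat.choose gp.card (k-3) : ℕ) : ℝ) := by
          exact_mod_cast hnat
      _ ≤ (Nat.choose k 2 : ℝ) * ((gp.card : ℝ) ^ (k-3)) := by
          push_cast
          exact mul_le_mul (by exact_mod_cast Nat.choose_le_choose 2 (Nat.sub_le k 1))
            (by exact_mod_cast Nat.choose_le_pow gp.card (k-3)) (by positivity) (by positivity)
      _ ≤ (Nat.choose k 2 : ℝ) * (2 * Real.sqrt m) ^ (k - 3) := by
          exact mul_le_mul_of_nonneg_left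
            (pow_le_pow_left₀ (by positivity) (hgam u) _) (by positivity)
      _ ≤ (Nat.choose k 2 : ℝ) * (2 * Real.sqrt m) ^ (k - 3) * (Nat.factorial (k - 3)) := by
          exact le_mul_of_one_le_right (by positivity)
            (by exact_mod_cast Nat.one_le_iff_ne_zero.mpr (Nat.factorial_ne_zero _))
  refine ⟨hb1, hb1.trans (le_of_eq ?_)⟩
  -- (2√m)^(k-3) rearrangement
  have hsqrt : Real.sqrt m ^ (k - 3) = (m : ℝ) ^ (((k:ℝ) - 3) / 2) := by
    have h1 : ((k:ℝ) - 3) = ((k - 3 : ℕ) : ℝ) := by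
      push_cast [Nat.cast_sub hk]; ring
    rw [h1, Real.sqrt_eq_rpow, ← Real.rpow_natCast ((m:ℝ) ^ ((1:ℝ)/2)) (k-3),
      ← Real.rpow_mul (by positivity)]
    ring_nf
  rw [mul_pow, ← hsqrt]
  ring
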